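/- For any lattice (d,k)-polytope P with d ≥ 3 and any two vertices u, v of P, the edge-graph distance between u and v is at most δ(d−1,k) + k. -/

import Mathlib

open Set

noncomputable def edgeGraph (d : ℕ) (P : Set (Fin d → ℝ)) : SimpleGraph (Fin d → ℝ) where
  Adj a b := a ≠ b ∧ IsExtreme ℝ P (segment ℝ a b)
  symm := by
    constructor
    intro a b h
    exact ⟨h.1.symm, by rw [segment_symm]; exact h.2⟩
  loopless := by
    constructor
    intro a h
    exact h.1 rfl

/-- Edge-graph diameter of a polytope, as the sup of pairwise distances between vertices. -/
noncomputable def polyDiam (d : ℕ) (P : Set (Fin d → ℝ)) : ℕ :=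
  sSup {n : ℕ | ∃ u ∈ P.extremePoints ℝ, ∃ v ∈ P.extremePoints ℝ,
    (edgeGraph d P).dist u v = n}

/-- A lattice (d,k)-polytope: convex hull of a nonempty finite set of points in {0,…,k}^d. -/
def IsLatticePolytope (d k : ℕ) (P : Set (Fin d → ℝ)) : Prop :=
  ∃ V : Finset (Fin d → ℝ), V.Nonempty ∧
    (∀ x ∈ V, ∀ i, ∃ m : ℕ, m ≤ k ∧ x i = (m : ℝ)) ∧
    P = convexHull ℝ (V : Set (Fin d → ℝ))

/-- δ(d,k): the largest edge-graph diameter of a lattice (d,k)-polytope. -/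
noncomputable def deltaLP (d k : ℕ) : ℕ :=
  sSup {n : ℕ | ∃ P : Set (Fin d → ℝ), IsLatticePolytope d k P ∧ polyDiam d P = n}

/-!
Write `P = conv V` and follow a linear functional `f` upwards along edges, as in the simplex
method. A vertex `u` that does not maximise `f` has a neighbour `w` with `f u < f w`: rescale the
vectors `x - u` onto a hyperplane `g = -1` separating `u` from the other vertices (the vertex
figure of `u`); a vertex `z` of the vertex figure maximising `f` spans an edge `[u, w]`, exposed by
a functional that separates `z` from the rest of the vertex figure, corrected by a multiple of `g`.

For `f = ± x 0` each step changes the integer coordinate `x 0` by at least one, and the face where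
`x 0` is extremal lies in a hyperplane `x 0 = c`, so it is a copy of a lattice `(d - 1, k)`-polytope
whose edges are edges of `P`. If `u 0 + v 0 ≤ k`, walk from `u` and `v` down to the face where
`x 0` is minimal, in at most `u 0 + v 0 ≤ k` steps; otherwise walk up to the face where `x 0` is
maximal, in at most `(k - u 0) + (k - v 0) < k` steps. Inside the face the two endpoints are at
distance at most `δ(d - 1, k)`.
-/

section ConvexPolytope

variable {E : Type*} [AddCommGroup E] [Module ℝ E]

theorem AffineMap.isExtreme_image_iff {F : Type*} [AddCommGroup F] [Module ℝ F]
    (φ : E →ᵃ[ℝ] F) (hφ : Function.Injective φ) {A B : Set E} :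
    IsExtreme ℝ (φ '' A) (φ '' B) ↔ IsExtreme ℝ A B := by
  simp only [isExtreme_iff, Set.image_subset_image_iff hφ, forall_mem_image, ← image_openSegment,
    hφ.mem_set_image]

theorem convexHull_insert_eq_segment {u w : E} {R : Set E} (hw : w ∈ R)
    (hR : R ⊆ segment ℝ u w) : convexHull ℝ (insert u R) = segment ℝ u w := by
  refine Subset.antisymm
    (convexHull_min (insert_subset (left_mem_segment ℝ u w) hR) (convex_segment u w)) ?_
  rw [← convexHull_pair]
  exact convexHull_mono (insert_subset_insert (singleton_subset_iff.2 hw))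

theorem mem_segment_of_sub_eq_smul {u w x z : E} {a b : ℝ} (ha : 0 ≤ a) (hab : a ≤ b)
    (hb : 0 < b) (hx : x - u = a • z) (hw : w - u = b • z) : x ∈ segment ℝ u w := by
  rw [segment_eq_image']
  refine ⟨a / b, ⟨div_nonneg ha hb.le, div_le_one_of_le₀ hab hb.le⟩, ?_⟩
  dsimp only
  rw [hw, smul_smul, div_mul_cancel₀ _ hb.ne', ← hx, add_sub_cancel]

variable [TopologicalSpace E]

theorem ContinuousLinearMap.mem_toExposed_convexHull_iff (l : StrongDual ℝ E) {s : Set E} {x : E} :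
    x ∈ l.toExposed (convexHull ℝ s) ↔ x ∈ convexHull ℝ s ∧ ∀ y ∈ s, l y ≤ l x :=
  and_congr_right fun _ => ⟨fun h y hy => h y (subset_convexHull ℝ s hy),
    fun h _ hy => convexHull_min h (convex_halfSpace_le l.toLinearMap.isLinear _) hy⟩

/-- The vertex figure of `u`: each `x - u` rescaled onto the hyperplane `g = -1`. -/
noncomputable def vertexFigureMap (g : StrongDual ℝ E) (u x : E) : E :=
  (g u - g x)⁻¹ • (x - u)

theorem sub_eq_smul_vertexFigureMap (g : StrongDual ℝ E) {u x : E} (hx : g x ≠ g u) :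
    x - u = (g u - g x) • vertexFigureMap g u x := by
  rw [vertexFigureMap, smul_smul, mul_inv_cancel₀ (sub_ne_zero.2 hx.symm), one_smul]

theorem map_sub_eq_mul_map_vertexFigureMap (l g : StrongDual ℝ E) {u x : E} (hx : g x ≠ g u) :
    l x - l u = (g u - g x) * l (vertexFigureMap g u x) := by
  rw [← map_sub, sub_eq_smul_vertexFigureMap g hx, map_smul, smul_eq_mul]

theorem toExposed_add_smul_eq_insert {s : Set E} {u z : E} (hu : u ∈ s) {g h₀ : StrongDual ℝ E}
    (hg : ∀ x ∈ s, x ≠ u → g x < g u)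
    (hh₀ : ∀ y ∈ vertexFigureMap g u '' (s \ {u}), y ≠ z → h₀ y < h₀ z) :
    (h₀ + h₀ z • g).toExposed s = insert u {x ∈ s \ {u} | vertexFigureMap g u x = z} := by
  set t := vertexFigureMap g u
  set h := h₀ + h₀ z • g
  have hc : ∀ x ∈ s \ {u}, 0 < g u - g x := fun x hx => sub_pos.2 (hg x hx.1 hx.2)
  have hkey : ∀ x ∈ s \ {u}, h x - h u = (g u - g x) * (h₀ (t x) - h₀ z) := fun x hx => by
    have := map_sub_eq_mul_map_vertexFigureMap h₀ g (hg x hx.1 hx.2).ne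
    simp only [h, add_apply, smul_apply, smul_eq_mul]
    linear_combination this
  have hle : ∀ y ∈ s, h y ≤ h u := fun y hy => by
    rcases eq_or_ne y u with rfl | hyu
    · exact le_rfl
    have hh₀le : h₀ (t y) ≤ h₀ z := (eq_or_ne (t y) z).elim (fun e => e ▸ le_rfl)
      fun e => (hh₀ _ (mem_image_of_mem t ⟨hy, hyu⟩) e).le
    nlinarith [hkey y ⟨hy, hyu⟩, hc y ⟨hy, hyu⟩]
  ext x
  refine ⟨fun ⟨hx, hmax⟩ => ?_, ?_⟩
  · refine (eq_or_ne x u).imp id fun hxu => ⟨⟨hx, hxu⟩, ?_⟩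
    by_contra htx
    nlinarith [hkey x ⟨hx, hxu⟩, hc x ⟨hx, hxu⟩, hh₀ _ (mem_image_of_mem t ⟨hx, hxu⟩) htx,
      hmax u hu]
  · rintro (rfl | ⟨hx, htx⟩)
    · exact ⟨hu, hle⟩
    · refine ⟨hx.1, fun y hy => (hle y hy).trans_eq ?_⟩
      have := hkey x hx
      rw [htx, sub_self, mul_zero] at this
      linarith

variable [T2Space E] [IsTopologicalAddGroup E] [ContinuousSMul ℝ E] [LocallyConvexSpace ℝ E]

namespace ContinuousLinearMap

theorem toExposed_convexHull (l : StrongDual ℝ E) {s : Set E} (hs : s.Finite) :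
    l.toExposed (convexHull ℝ s) = convexHull ℝ (l.toExposed s) := by
  have hF : IsExposed ℝ (convexHull ℝ s) (l.toExposed (convexHull ℝ s)) := toExposed.isExposed
  refine Subset.antisymm ?_ (convexHull_min (fun x hx => ?_) (hF.convex (convex_convexHull ℝ s)))
  · rw [← closure_convexHull_extremePoints (hF.isCompact (hs.isCompact_convexHull (𝕜 := ℝ)))
      (hF.convex (convex_convexHull ℝ s))]
    refine closure_minimal (convexHull_mono fun x hx => ⟨?_, ?_⟩)
      ((hs.subset fun _ h => h.1).isClosed_convexHull (𝕜 := ℝ))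
    · exact extremePoints_convexHull_subset (hF.isExtreme.extremePoints_subset_extremePoints hx)
    · exact fun y hy => (extremePoints_subset hx).2 y (subset_convexHull ℝ s hy)
  · exact (mem_toExposed_convexHull_iff l).2 ⟨subset_convexHull ℝ s hx.1, hx.2⟩

theorem exists_mem_extremePoints_mem_toExposed (l : StrongDual ℝ E) {s : Set E} (hs : s.Finite)
    (hne : s.Nonempty) : ∃ z ∈ (convexHull ℝ s).extremePoints ℝ, z ∈ l.toExposed s := by
  have hF : IsExposed ℝ (convexHull ℝ s) (l.toExposed (convexHull ℝ s)) := toExposed.isExposed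
  obtain ⟨x, hx, hmax⟩ := s.exists_max_image l hs hne
  obtain ⟨z, hz⟩ := (hF.isCompact (hs.isCompact_convexHull (𝕜 := ℝ))).extremePoints_nonempty
    ⟨x, (mem_toExposed_convexHull_iff l).2 ⟨subset_convexHull ℝ s hx, hmax⟩⟩
  refine ⟨z, hF.isExtreme.extremePoints_subset_extremePoints hz, ?_⟩
  rw [toExposed_convexHull l hs] at hz
  exact extremePoints_convexHull_subset hz

theorem mem_extremePoints_convexHull_of_forall_lt (l : StrongDual ℝ E) {s : Set E}
    (hs : s.Finite) {x : E} (hx : x ∈ s) (hlt : ∀ y ∈ s, y ≠ x → l y < l x) :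
    x ∈ (convexHull ℝ s).extremePoints ℝ := by
  have hface : l.toExposed s = {x} := by
    refine Subset.antisymm (fun y hy => ?_) (singleton_subset_iff.2 ⟨hx, fun y hy => ?_⟩)
    · by_contra hyx
      exact (hy.2 x hx).not_gt (hlt y hy.1 hyx)
    · rcases eq_or_ne y x with rfl | hyx
      exacts [le_rfl, (hlt y hy hyx).le]
  rw [← isExtreme_singleton, ← convexHull_singleton (𝕜 := ℝ) x, ← hface,
    ← toExposed_convexHull l hs]
  exact (toExposed.isExposed : IsExposed ℝ (convexHull ℝ s) _).isExtreme

end ContinuousLinearMap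

open ContinuousLinearMap

theorem exists_forall_lt_of_mem_extremePoints_convexHull {s : Set E} (hs : s.Finite) {u : E}
    (hu : u ∈ (convexHull ℝ s).extremePoints ℝ) :
    ∃ g : StrongDual ℝ E, ∀ x ∈ s, x ≠ u → g x < g u := by
  have hnot : u ∉ convexHull ℝ (s \ {u}) := fun h =>
    ((convex_convexHull ℝ s).mem_extremePoints_iff_mem_sdiff_convexHull_sdiff.1 hu).2
      (convexHull_mono (sdiff_subset_sdiff_left (subset_convexHull ℝ s)) h)
  obtain ⟨g, a, hgu, hg⟩ :=
    geometric_hahn_banach_point_closed (convex_convexHull ℝ _)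
      (hs.sdiff.isClosed_convexHull (𝕜 := ℝ)) hnot
  exact ⟨-g, fun x hx hxu => neg_lt_neg (hgu.trans (hg x (subset_convexHull ℝ _ ⟨hx, hxu⟩)))⟩

theorem exists_isExtreme_segment_of_mem_extremePoints_vertexFigure {s : Set E} (hs : s.Finite)
    {u : E} (hu : u ∈ s) {g : StrongDual ℝ E} (hg : ∀ x ∈ s, x ≠ u → g x < g u) {z : E}
    (hz : z ∈ (convexHull ℝ (vertexFigureMap g u '' (s \ {u}))).extremePoints ℝ) :
    ∃ w ∈ s \ {u}, vertexFigureMap g u w = z ∧ IsExtreme ℝ (convexHull ℝ s) (segment ℝ u w) := by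
  set R := {x ∈ s \ {u} | vertexFigureMap g u x = z}
  have hc : ∀ x ∈ s \ {u}, 0 < g u - g x := fun x hx => sub_pos.2 (hg x hx.1 hx.2)
  obtain ⟨h₀, hh₀⟩ := exists_forall_lt_of_mem_extremePoints_convexHull (hs.sdiff.image _) hz
  obtain ⟨w, hwR, hwmax⟩ := R.exists_max_image (fun x => g u - g x)
    (hs.sdiff.subset fun _ h => h.1) (by
      obtain ⟨x, hx, rfl⟩ := extremePoints_convexHull_subset hz
      exact ⟨x, hx, rfl⟩)
  have hseg : R ⊆ segment ℝ u w := fun x hx => by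
    refine mem_segment_of_sub_eq_smul (z := z) (hc x hx.1).le (hwmax x hx) (hc w hwR.1) ?_ ?_
    · rw [← hx.2]; exact sub_eq_smul_vertexFigureMap g (hg x hx.1.1 hx.1.2).ne
    · rw [← hwR.2]; exact sub_eq_smul_vertexFigureMap g (hg w hwR.1.1 hwR.1.2).ne
  refine ⟨w, hwR.1, hwR.2, ?_⟩
  rw [← convexHull_insert_eq_segment hwR hseg, ← toExposed_add_smul_eq_insert hu hg hh₀,
    ← toExposed_convexHull _ hs]
  exact (toExposed.isExposed : IsExposed ℝ (convexHull ℝ s) _).isExtreme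

theorem exists_isExtreme_segment_of_lt {s : Set E} (hs : s.Finite) {u v : E}
    (hu : u ∈ (convexHull ℝ s).extremePoints ℝ) (hv : v ∈ s) (f : StrongDual ℝ E)
    (hfv : f u < f v) :
    ∃ w ∈ s, u ≠ w ∧ IsExtreme ℝ (convexHull ℝ s) (segment ℝ u w) ∧
      w ∈ (convexHull ℝ s).extremePoints ℝ ∧ f u < f w := by
  obtain ⟨g, hg⟩ := exists_forall_lt_of_mem_extremePoints_convexHull hs hu
  have hvu : v ≠ u := by rintro rfl; exact hfv.false
  have hvs : v ∈ s \ {u} := ⟨hv, hvu⟩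
  obtain ⟨z, hz, -, hzmax⟩ := f.exists_mem_extremePoints_mem_toExposed (hs.sdiff.image _)
    ⟨_, mem_image_of_mem (vertexFigureMap g u) hvs⟩
  obtain ⟨w, ⟨hws, hwu⟩, rfl, hseg⟩ := exists_isExtreme_segment_of_mem_extremePoints_vertexFigure
    hs (extremePoints_convexHull_subset hu) hg hz
  have hfw : f u < f w := by
    have hv' := map_sub_eq_mul_map_vertexFigureMap f g (hg v hv hvu).ne
    have hw' := map_sub_eq_mul_map_vertexFigureMap f g (hg w hws hwu).ne
    have htv : 0 < f (vertexFigureMap g u v) :=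
      (pos_iff_pos_of_mul_pos (hv' ▸ sub_pos.2 hfv)).1 (sub_pos.2 (hg v hv hvu))
    rw [← sub_pos, hw']
    exact mul_pos (sub_pos.2 (hg w hws hwu)) (htv.trans_le (hzmax _ (mem_image_of_mem _ hvs)))
  refine ⟨w, hws, Ne.symm hwu, hseg, hseg.extremePoints_subset_extremePoints ?_, hfw⟩
  rw [← convexHull_pair]
  refine f.mem_extremePoints_convexHull_of_forall_lt (toFinite _) (mem_insert_of_mem _ rfl) ?_
  rintro y (rfl | rfl) hyw
  exacts [hfw, absurd rfl hyw]

end ConvexPolytope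

open ContinuousLinearMap SimpleGraph

section EdgeGraph

variable {d : ℕ}

theorem edgeGraph_adj_map {e : ℕ} {σ : (Fin e → ℝ) →ᵃ[ℝ] (Fin d → ℝ)} (hσ : Function.Injective σ)
    {Q : Set (Fin e → ℝ)} {P : Set (Fin d → ℝ)} (hQP : IsExtreme ℝ P (σ '' Q)) {x y : Fin e → ℝ}
    (hxy : (edgeGraph e Q).Adj x y) : (edgeGraph d P).Adj (σ x) (σ y) :=
  ⟨hσ.ne hxy.1, hQP.trans (image_segment ℝ σ x y ▸ (σ.isExtreme_image_iff hσ).2 hxy.2)⟩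

theorem exists_walk_to_toExposed (V : Finset (Fin d → ℝ)) (f : StrongDual ℝ (Fin d → ℝ))
    (r : (Fin d → ℝ) → ℕ) (hr : ∀ x ∈ V, ∀ y ∈ V, f x < f y → r y < r x) {u : Fin d → ℝ}
    (hu : u ∈ (convexHull ℝ (V : Set (Fin d → ℝ))).extremePoints ℝ) :
    ∃ a ∈ (convexHull ℝ (V : Set (Fin d → ℝ))).extremePoints ℝ,
      a ∈ f.toExposed (V : Set (Fin d → ℝ)) ∧
      ∃ p : (edgeGraph d (convexHull ℝ (V : Set (Fin d → ℝ)))).Walk u a, p.length ≤ r u := by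
  induction hn : r u using Nat.strong_induction_on generalizing u with
  | _ n ih =>
  have huV : u ∈ V := extremePoints_convexHull_subset hu
  by_cases! hmax : ∀ y ∈ V, f y ≤ f u
  · exact ⟨u, hu, ⟨huV, hmax⟩, .nil, Nat.zero_le _⟩
  obtain ⟨v, hv, hlt⟩ := hmax
  obtain ⟨w, hw, huw, hseg, hwext, hfw⟩ :=
    exists_isExtreme_segment_of_lt V.finite_toSet hu hv f hlt
  have hrw : r w < n := hn ▸ hr u huV w hw hfw
  obtain ⟨a, ha, hamax, p, hp⟩ := ih (r w) hrw hwext rfl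
  have hadj : (edgeGraph d (convexHull ℝ (V : Set (Fin d → ℝ)))).Adj u w := ⟨huw, hseg⟩
  exact ⟨a, ha, hamax, .cons hadj p, by rw [Walk.length_cons]; omega⟩

theorem exists_walk_length_le_card (V : Finset (Fin d → ℝ)) {u v : Fin d → ℝ}
    (hu : u ∈ (convexHull ℝ (V : Set (Fin d → ℝ))).extremePoints ℝ)
    (hv : v ∈ (convexHull ℝ (V : Set (Fin d → ℝ))).extremePoints ℝ) :
    ∃ p : (edgeGraph d (convexHull ℝ (V : Set (Fin d → ℝ)))).Walk u v, p.length ≤ V.card := by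
  classical
  obtain ⟨g, hg⟩ := exists_forall_lt_of_mem_extremePoints_convexHull V.finite_toSet hv
  obtain ⟨a, -, ⟨haV, hamax⟩, p, hp⟩ := exists_walk_to_toExposed V g
    (fun x => (V.filter (g x < g ·)).card) (fun x _ y hy hxy => Finset.card_lt_card
      ⟨Finset.monotone_filter_right _ fun _ _ => hxy.trans, fun h => (lt_irrefl (g y)
        (Finset.mem_filter.1 (h (Finset.mem_filter.2 ⟨hy, hxy⟩))).2)⟩) hu
  obtain rfl : a = v := by_contra fun hav =>
    (hamax v (extremePoints_convexHull_subset hv)).not_gt (hg a haV hav)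
  exact ⟨p, hp.trans (Finset.card_filter_le _ _)⟩

end EdgeGraph

section LatticePolytope

variable {d k : ℕ}

theorem card_le_pow_of_forall_mem_lattice (V : Finset (Fin d → ℝ))
    (hV : ∀ x ∈ V, ∀ i, ∃ m : ℕ, m ≤ k ∧ x i = (m : ℝ)) : V.card ≤ (k + 1) ^ d := by
  classical
  calc V.card ≤ (Finset.univ.image fun n : Fin d → Fin (k + 1) => fun i => ((n i : ℕ) : ℝ)).card :=
        Finset.card_le_card fun x hx => by
          choose m hmk hm using hV x hx
          exact Finset.mem_image.2 ⟨fun i => ⟨m i, Nat.lt_succ_of_le (hmk i)⟩, Finset.mem_univ _,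
            funext fun i => (hm i).symm⟩
    _ ≤ (k + 1) ^ d := Finset.card_image_le.trans (by simp)

-- `polyDiam` and `deltaLP` are `sSup`s in `ℕ`, which are `0` on unbounded sets; the uniform bound
-- `(k + 1) ^ d` on distances makes them genuine maxima.
theorem IsLatticePolytope.exists_walk {P : Set (Fin d → ℝ)} (hP : IsLatticePolytope d k P)
    {u v : Fin d → ℝ} (hu : u ∈ P.extremePoints ℝ) (hv : v ∈ P.extremePoints ℝ) :
    ∃ p : (edgeGraph d P).Walk u v, p.length ≤ (k + 1) ^ d := by
  obtain ⟨V, -, hV, rfl⟩ := hP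
  obtain ⟨p, hp⟩ := exists_walk_length_le_card V hu hv
  exact ⟨p, hp.trans (card_le_pow_of_forall_mem_lattice V hV)⟩

theorem IsLatticePolytope.polyDiam_le {P : Set (Fin d → ℝ)} (hP : IsLatticePolytope d k P) :
    polyDiam d P ≤ (k + 1) ^ d :=
  csSup_le' fun _ ⟨_, hu, _, hv, h⟩ =>
    h ▸ (dist_le _).trans (hP.exists_walk hu hv).choose_spec

theorem IsLatticePolytope.dist_le_deltaLP {P : Set (Fin d → ℝ)} (hP : IsLatticePolytope d k P)
    {u v : Fin d → ℝ} (hu : u ∈ P.extremePoints ℝ) (hv : v ∈ P.extremePoints ℝ) :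
    (edgeGraph d P).dist u v ≤ deltaLP d k :=
  calc (edgeGraph d P).dist u v ≤ polyDiam d P :=
        le_csSup ⟨_, fun _ ⟨_, hx, _, hy, h⟩ =>
          h ▸ (dist_le _).trans (hP.exists_walk hx hy).choose_spec⟩ ⟨u, hu, v, hv, rfl⟩
    _ ≤ deltaLP d k :=
        le_csSup ⟨(k + 1) ^ d, fun _ ⟨_, hQ, h⟩ => h ▸ hQ.polyDiam_le⟩ ⟨P, hP, rfl⟩

end LatticePolytope

section CoordinateFace

noncomputable def finConsAffine (e : ℕ) (c : ℝ) : (Fin e → ℝ) →ᵃ[ℝ] (Fin (e + 1) → ℝ) where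
  toFun y := Fin.cons c y
  linear := (Fin.consLinearEquiv ℝ fun _ => ℝ).toLinearMap ∘ₗ LinearMap.inr ℝ ℝ (Fin e → ℝ)
  map_vadd' p v := by ext i; refine Fin.cases ?_ (fun j => ?_) i <;> simp

theorem exists_walk_length_le_deltaLP_of_mem_face {e k : ℕ} {V W : Finset (Fin (e + 1) → ℝ)}
    (hV : ∀ x ∈ V, ∀ i, ∃ m : ℕ, m ≤ k ∧ x i = (m : ℝ)) (hWV : W ⊆ V) {c : ℝ}
    (hWc : ∀ x ∈ W, x 0 = c)
    (hW : IsExtreme ℝ (convexHull ℝ (V : Set (Fin (e + 1) → ℝ))) (convexHull ℝ (W : Set _)))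
    {a b : Fin (e + 1) → ℝ} (ha : a ∈ (convexHull ℝ (V : Set (Fin (e + 1) → ℝ))).extremePoints ℝ)
    (hb : b ∈ (convexHull ℝ (V : Set (Fin (e + 1) → ℝ))).extremePoints ℝ) (haW : a ∈ W)
    (hbW : b ∈ W) :
    ∃ p : (edgeGraph (e + 1) (convexHull ℝ (V : Set (Fin (e + 1) → ℝ)))).Walk a b,
      p.length ≤ deltaLP e k := by
  classical
  set σ := finConsAffine e c
  have hσ : Function.Injective σ := Fin.cons_right_injective (α := fun _ => ℝ) c
  have hσtail : ∀ x ∈ W, σ (Fin.tail x) = x := fun x hx => by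
    simp only [σ, finConsAffine, AffineMap.coe_mk, ← hWc x hx, Fin.cons_self_tail]
  set Q := convexHull ℝ ((W.image Fin.tail : Finset (Fin e → ℝ)) : Set (Fin e → ℝ))
  have hQ : IsLatticePolytope e k Q := ⟨_, ⟨_, Finset.mem_image_of_mem _ haW⟩, fun y hy i => by
    obtain ⟨x, hx, rfl⟩ := Finset.mem_image.1 hy
    exact hV x (hWV hx) i.succ, rfl⟩
  have hσQ : σ '' Q = convexHull ℝ (W : Set (Fin (e + 1) → ℝ)) := by
    rw [AffineMap.image_convexHull, Finset.coe_image, image_image, image_congr hσtail, image_id']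
  have htail : ∀ x ∈ W, x ∈ (convexHull ℝ (V : Set (Fin (e + 1) → ℝ))).extremePoints ℝ →
      Fin.tail x ∈ Q.extremePoints ℝ := fun x hx hxV => by
    rw [← isExtreme_singleton, ← σ.isExtreme_image_iff hσ, image_singleton, hσQ, hσtail x hx,
      isExtreme_singleton]
    exact inter_extremePoints_subset_extremePoints_of_subset hW.subset
      ⟨subset_convexHull ℝ _ hx, hxV⟩
  obtain ⟨p, hp⟩ := (hQ.exists_walk (htail a haW ha) (htail b hbW hb)).elim fun p _ =>
    Reachable.exists_walk_length_eq_dist ⟨p⟩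
  refine ⟨(p.map ⟨σ, edgeGraph_adj_map hσ (hσQ ▸ hW)⟩).copy (hσtail a haW) (hσtail b hbW), ?_⟩
  rw [Walk.length_copy, Walk.length_map, hp]
  exact hQ.dist_le_deltaLP (htail a haW ha) (htail b hbW hb)

theorem dist_le_add_add_deltaLP {e k : ℕ} {V : Finset (Fin (e + 1) → ℝ)}
    (hV : ∀ x ∈ V, ∀ i, ∃ m : ℕ, m ≤ k ∧ x i = (m : ℝ)) (f : StrongDual ℝ (Fin (e + 1) → ℝ))
    (hf : ∀ x ∈ V, ∀ y ∈ V, f x = f y → x 0 = y 0) (r : (Fin (e + 1) → ℝ) → ℕ)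
    (hr : ∀ x ∈ V, ∀ y ∈ V, f x < f y → r y < r x) {u v : Fin (e + 1) → ℝ}
    (hu : u ∈ (convexHull ℝ (V : Set (Fin (e + 1) → ℝ))).extremePoints ℝ)
    (hv : v ∈ (convexHull ℝ (V : Set (Fin (e + 1) → ℝ))).extremePoints ℝ) :
    (edgeGraph (e + 1) (convexHull ℝ (V : Set (Fin (e + 1) → ℝ)))).dist u v ≤
      r u + r v + deltaLP e k := by
  classical
  obtain ⟨a, ha, haF, p, hp⟩ := exists_walk_to_toExposed V f r hr hu
  obtain ⟨b, hb, hbF, q, hq⟩ := exists_walk_to_toExposed V f r hr hv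
  set W := V.filter (· ∈ f.toExposed (V : Set (Fin (e + 1) → ℝ)))
  have hWV : W ⊆ V := Finset.filter_subset _ _
  have hWc : ∀ x ∈ W, x 0 = a 0 := fun x hx =>
    have hxF := (Finset.mem_filter.1 hx).2
    hf x hxF.1 a haF.1 (le_antisymm (haF.2 x hxF.1) (hxF.2 a haF.1))
  have hW : IsExtreme ℝ (convexHull ℝ (V : Set (Fin (e + 1) → ℝ)))
      (convexHull ℝ (W : Set (Fin (e + 1) → ℝ))) := by
    have hWF : (W : Set (Fin (e + 1) → ℝ)) =
        f.toExposed (V : Set (Fin (e + 1) → ℝ)) := by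
      ext x
      simpa [W] using fun h : x ∈ f.toExposed (V : Set (Fin (e + 1) → ℝ)) => h.1
    rw [hWF, ← f.toExposed_convexHull V.finite_toSet]
    exact (toExposed.isExposed : IsExposed ℝ (convexHull ℝ (V : Set (Fin (e + 1) → ℝ))) _).isExtreme
  obtain ⟨s, hs⟩ := exists_walk_length_le_deltaLP_of_mem_face hV hWV hWc hW ha hb
    (Finset.mem_filter.2 ⟨haF.1, haF⟩) (Finset.mem_filter.2 ⟨hbF.1, hbF⟩)
  calc _ ≤ (p.append (s.append q.reverse)).length := dist_le _
    _ ≤ r u + r v + deltaLP e k := by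
      simp only [Walk.length_append, Walk.length_reverse]
      omega

end CoordinateFace

theorem recursive_upper_bound_general (d k : ℕ)
    (P : Set (Fin d → ℝ)) (hP : IsLatticePolytope d k P)
    (u v : Fin d → ℝ) (hu : u ∈ P.extremePoints ℝ) (hv : v ∈ P.extremePoints ℝ) :
    (edgeGraph d P).dist u v ≤ deltaLP (d - 1) k + k := by
  rcases d with _ | e
  · simp [Subsingleton.elim u v]
  obtain ⟨V, -, hV, rfl⟩ := hP
  rw [add_tsub_cancel_right]
  have hfloor_lt : ∀ x ∈ V, ∀ y ∈ V, x 0 < y 0 → ⌊x 0⌋₊ < ⌊y 0⌋₊ := fun x hx y hy h => by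
    obtain ⟨m, -, hm⟩ := hV x hx 0
    obtain ⟨n, -, hn⟩ := hV y hy 0
    rw [hm, hn] at h ⊢
    simpa using h
  have hfloor_le : ∀ x ∈ V, ⌊x 0⌋₊ ≤ k := fun x hx => by
    obtain ⟨m, hmk, hm⟩ := hV x hx 0
    simpa [hm] using hmk
  rcases le_or_gt (⌊u 0⌋₊ + ⌊v 0⌋₊) k with hk | hk
  · -- descend to the face where `x 0` is minimal
    have := dist_le_add_add_deltaLP hV (-proj 0) (by simp) (fun x => ⌊x 0⌋₊)
      (fun x hx y hy h => hfloor_lt y hy x hx (by simpa using h)) hu hv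
    omega
  · -- ascend to the face where `x 0` is maximal
    have := dist_le_add_add_deltaLP hV (proj 0) (fun _ _ _ _ h => h) (fun x => k - ⌊x 0⌋₊)
      (fun x hx y hy h => by have := hfloor_lt x hx y hy h; have := hfloor_le y hy; omega) hu hv
    omega

theorem recursive_upper_bound (d k : ℕ) (hd : 3 ≤ d)
    (P : Set (Fin d → ℝ)) (hP : IsLatticePolytope d k P)
    (u v : Fin d → ℝ) (hu : u ∈ P.extremePoints ℝ) (hv : v ∈ P.extremePoints ℝ) :
    (edgeGraph d P).dist u v ≤ deltaLP (d - 1) k + k :=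
  recursive_upper_bound_general d k P hP u v hu hv
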